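/- Let L be a first-order language with no relation symbols, let {w_ω} be a system of words for L that is invertible on the L-structures B₁, B₂ and H, and let s₁ : B₁ → B₁ and s₂ : B₂ → B₂ be bijections that are isomorphisms from B₁ to B₁* and from B₂ to B₂* respectively. Let μ₁, μ₂ : B₁ → B₂ be L-homomorphisms and let T ⊆ B₂ × B₂ be an H-closed congruence such that (μ₁(b), μ₂(b)) ∈ T for every b ∈ B₁. Then the maps s₂⁻¹ ∘ μ₁ ∘ s₁ and s₂⁻¹ ∘ μ₂ ∘ s₁ are L-homomorphisms from B₁ to B₂, the set s₂⁻¹T = {(a,b) : (s₂(a), s₂(b)) ∈ T} is an H*-closed congruence on B₂, and ((s₂⁻¹ ∘ μ₁ ∘ s₁)(b), (s₂⁻¹ ∘ μ₂ ∘ s₁)(b)) ∈ s₂⁻¹T for every b ∈ B₁. -/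
import Mathlib


open FirstOrder FirstOrder.Language

/-- Realization of a term in an explicitly given structure. -/
def realizeIn {L : Language} {M : Type*} (S : L.Structure M) {α : Type*}
    (v : α → M) (t : L.Term α) : M :=
  @FirstOrder.Language.Term.realize L M S α v t

/-- The structure `M*` induced on `M` by a system of words `W`: each `n`-ary function
symbol `f` is interpreted by the verbal operation induced by the word `W n f`. -/
def starStructure {L : Language} (W : ∀ n, L.Functions n → L.Term (Fin n))
    {M : Type*} (S : L.Structure M) : L.Structure M where
  funMap {n} f x := realizeIn S x (W n f)
  RelMap {n} r x := S.RelMap r x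

/-- `φ : M → N` is an `L`-homomorphism from `SM` to `SN` (for a language with no relation
symbols this is exactly compatibility with all function symbols). -/
def IsHomOn {L : Language} {M N : Type*} (SM : L.Structure M) (SN : L.Structure N)
    (φ : M → N) : Prop :=
  ∀ (n : ℕ) (f : L.Functions n) (x : Fin n → M),
    φ (SM.funMap f x) = SN.funMap f (φ ∘ x)

/-- The family of terms `U` inverts the system of words `W` on the structure `S`:
the original operations of `S` are the verbal operations of `starStructure W S`
induced by the terms `U`. -/
def Inverts {L : Language} (W U : ∀ n, L.Functions n → L.Term (Fin n))
    {M : Type*} (S : L.Structure M) : Prop :=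
  ∀ (n : ℕ) (f : L.Functions n) (a : Fin n → M),
    realizeIn (starStructure W S) a (U n f) = S.funMap f a

/-- The kernel of a map as a set of pairs. -/
def kerSet {B H : Type*} (φ : B → H) : Set (B × B) := {p | φ p.1 = φ p.2}

/-- `T ⊆ B × B` is `H`-closed: it equals the intersection of the kernels of all
homomorphisms `B → H` whose kernel contains `T`. -/
def IsClosedIn {L : Language} {B H : Type*} (SB : L.Structure B) (SH : L.Structure H)
    (T : Set (B × B)) : Prop :=
  T = {p : B × B | ∀ φ : B → H, IsHomOn SB SH φ → T ⊆ kerSet φ → φ p.1 = φ p.2}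

/-- A congruence on `B`: an equivalence relation compatible with all operations. -/
def IsCongruence {L : Language} {B : Type*} (SB : L.Structure B) (T : Set (B × B)) : Prop :=
  Equivalence (fun a b => (a, b) ∈ T) ∧
    ∀ (n : ℕ) (f : L.Functions n) (a b : Fin n → B),
      (∀ j, (a j, b j) ∈ T) → (SB.funMap f a, SB.funMap f b) ∈ T

/-- The bijection `s : B ≃ B` is an isomorphism from `B` to `B*`. -/
def IsStarIso {L : Language} (W : ∀ n, L.Functions n → L.Term (Fin n))
    {B : Type*} (SB : L.Structure B) (s : B ≃ B) : Prop :=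
  IsHomOn SB (starStructure W SB) s ∧ IsHomOn (starStructure W SB) SB s.symm


lemma hom_term {L : Language} {M N : Type*} {SM : L.Structure M} {SN : L.Structure N}
    {φ : M → N} (h : IsHomOn SM SN φ) {α : Type*} (v : α → M) (t : L.Term α) :
    φ (realizeIn SM v t) = realizeIn SN (φ ∘ v) t := by
  induction t with
  | var i => rfl
  | func f ts ih =>
    show φ (SM.funMap f fun i => realizeIn SM v (ts i))
        = SN.funMap f fun i => realizeIn SN (φ ∘ v) (ts i)
    rw [h _ f]
    congr 1
    funext j
    exact ih j

lemma hom_star {L : Language} (W : ∀ n, L.Functions n → L.Term (Fin n))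
    {M N : Type*} {SM : L.Structure M} {SN : L.Structure N}
    {φ : M → N} (h : IsHomOn SM SN φ) :
    IsHomOn (starStructure W SM) (starStructure W SN) φ := by
  intro n f x
  exact hom_term h x (W n f)

lemma hom_comp {L : Language} {M N K : Type*} {SM : L.Structure M} {SN : L.Structure N}
    {SK : L.Structure K} {φ : M → N} {ψ : N → K}
    (hφ : IsHomOn SM SN φ) (hψ : IsHomOn SN SK ψ) : IsHomOn SM SK (ψ ∘ φ) := by
  intro n f x
  show ψ (φ (SM.funMap f x)) = _
  rw [hφ, hψ]
  rfl

lemma cong_term {L : Language} {B : Type*} {SB : L.Structure B} {T : Set (B × B)}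
    (h : IsCongruence SB T) {n : ℕ} {a b : Fin n → B} (hab : ∀ j, (a j, b j) ∈ T)
    (t : L.Term (Fin n)) : (realizeIn SB a t, realizeIn SB b t) ∈ T := by
  induction t with
  | var i => exact hab i
  | func f ts ih =>
    exact h.2 _ f _ _ ih

/-- if `μ₁, μ₂ : B₁ → B₂` are homomorphisms and `T` is an `H`-closed
congruence with `(μ₁ b, μ₂ b) ∈ T` for all `b`, then `s₂⁻¹ ∘ μᵢ ∘ s₁` are homomorphisms
`B₁ → B₂`, `s₂⁻¹T` is an `H*`-closed congruence, and the images of every `b` under the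
two twisted homomorphisms are congruent modulo `s₂⁻¹T`. -/
theorem stmt11 {L : Language} (hL : ∀ n, IsEmpty (L.Relations n))
    (W : ∀ n, L.Functions n → L.Term (Fin n))
    {B₁ B₂ H : Type*} (S₁ : L.Structure B₁) (S₂ : L.Structure B₂) (SH : L.Structure H)
    (hinv : ∃ U : ∀ n, L.Functions n → L.Term (Fin n),
      Inverts W U S₁ ∧ Inverts W U S₂ ∧ Inverts W U SH)
    (s₁ : B₁ ≃ B₁) (hs₁ : IsStarIso W S₁ s₁)
    (s₂ : B₂ ≃ B₂) (hs₂ : IsStarIso W S₂ s₂)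
    (μ₁ μ₂ : B₁ → B₂) (hμ₁ : IsHomOn S₁ S₂ μ₁) (hμ₂ : IsHomOn S₁ S₂ μ₂)
    (T : Set (B₂ × B₂)) (hTcong : IsCongruence S₂ T) (hTcl : IsClosedIn S₂ SH T)
    (hμT : ∀ b : B₁, (μ₁ b, μ₂ b) ∈ T) :
    IsHomOn S₁ S₂ (⇑s₂.symm ∘ μ₁ ∘ ⇑s₁) ∧ IsHomOn S₁ S₂ (⇑s₂.symm ∘ μ₂ ∘ ⇑s₁) ∧
    IsCongruence S₂ {p : B₂ × B₂ | (s₂ p.1, s₂ p.2) ∈ T} ∧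
    IsClosedIn S₂ (starStructure W SH) {p : B₂ × B₂ | (s₂ p.1, s₂ p.2) ∈ T} ∧
    (∀ b : B₁, ((s₂.symm ∘ μ₁ ∘ s₁) b, (s₂.symm ∘ μ₂ ∘ s₁) b) ∈
      {p : B₂ × B₂ | (s₂ p.1, s₂ p.2) ∈ T}) := by
  obtain ⟨hs₁f, hs₁b⟩ := hs₁
  obtain ⟨hs₂f, hs₂b⟩ := hs₂
  have tw : ∀ μ : B₁ → B₂, IsHomOn S₁ S₂ μ → IsHomOn S₁ S₂ (⇑s₂.symm ∘ μ ∘ ⇑s₁) := by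
    intro μ hμ
    exact hom_comp (hom_comp hs₁f (hom_star W hμ)) hs₂b
  refine ⟨tw μ₁ hμ₁, tw μ₂ hμ₂, ?_, ?_, ?_⟩
  · constructor
    · constructor
      · intro a; exact hTcong.1.refl _
      · intro a b hab; exact hTcong.1.symm hab
      · intro a b c hab hbc; exact hTcong.1.trans hab hbc
    · intro n f a b hab
      show (s₂ (S₂.funMap f a), s₂ (S₂.funMap f b)) ∈ T
      rw [hs₂f n f a, hs₂f n f b]
      exact cong_term hTcong (fun j => hab j) (W n f)
  · apply Set.Subset.antisymm
    · intro p hp φ hφ hsub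
      exact hsub hp
    · intro p hp
      show (s₂ p.1, s₂ p.2) ∈ T
      rw [hTcl]
      intro ψ hψ hker
      have hφ : IsHomOn S₂ (starStructure W SH) (ψ ∘ ⇑s₂) :=
        hom_comp hs₂f (hom_star W hψ)
      have := hp (ψ ∘ ⇑s₂) hφ (by
        intro q hq
        exact hker hq)
      exact this
  · intro b
    show (s₂ (s₂.symm (μ₁ (s₁ b))), s₂ (s₂.symm (μ₂ (s₁ b)))) ∈ T
    simp only [Equiv.apply_symm_apply]
    exact hμT (s₁ b)
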